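/- Let 1 ≤ i ≤ n, let π be a connected decorated permutation of [n] with associated connected Grassmann necklace I, and let J be the connected Grassmann necklace associated to the connected decorated permutation LR^{2i}[π] defined by LR^{2i}[π](j) = 2i − π^{-1}(2i − j) (all values taken mod n in [n]). Then the exchange graphs G^I and G^J are isomorphic as simple graphs. -/

import Mathlib

/-! The reflection `x ↦ 2i - x` of `[n]` reverses the cyclic order, so it preserves weak
separation and carries mutations to mutations. It also carries the positroid of `π` onto that of
`LR^{2i}[π]`: by the counting form of the Gale order this amounts to
`#(I_u ∩ [u, v]) = #(J_{2i-v} ∩ [2i-v, 2i-u])` for every cyclic interval `[u, v]`. Reading the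
necklaces through the arrows `y ↦ π y`, both sides count the arrows that move backwards inside
`[u, v]`, plus those entering `[u, v]` on the left and those leaving it on the right; a
permutation has as many arrows entering a set as leaving it. The reflection therefore induces an
isomorphism of exchange graphs. -/

open SimpleGraph

namespace WS

/-- Integers (elements of the cyclically ordered set `[n]`, identified with `Fin n`)
are *cyclically ordered* if some rotation of the list is strictly increasing. -/
def CyclicallyOrdered {n : ℕ} (l : List (Fin n)) : Prop :=
  ∃ k : ℕ, (l.rotate k).Pairwise (· < ·)

/-- Two subsets of `[n]` are *weakly separated*. -/
def WeaklySeparated {n : ℕ} (A B : Finset (Fin n)) : Prop :=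
  ¬ ∃ a b a' b' : Fin n, CyclicallyOrdered [a, b, a', b'] ∧
      a ∈ A \ B ∧ a' ∈ A \ B ∧ b ∈ B \ A ∧ b' ∈ B \ A

/-- The cyclic successor `i + 1` in `[n]`. -/
def cnext {n : ℕ} (i : Fin n) : Fin n := i + ⟨1 % n, Nat.mod_lt 1 i.pos⟩

/-- A (connected) Grassmann necklace. -/
def IsGrassmannNecklace {n : ℕ} (N : Fin n → Finset (Fin n)) : Prop :=
  (∀ i j : Fin n, (N i).card = (N j).card) ∧
    (∀ i : Fin n, cnext i ∈ N (cnext i)) ∧ ∀ i : Fin n, N i \ {i} ⊆ N (cnext i)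

/-- The linear order `<ᵢ` on `[n]` starting at `i`. -/
def cyclicLT {n : ℕ} (i a b : Fin n) : Prop := (a - i).val < (b - i).val

instance {n : ℕ} (i a b : Fin n) : Decidable (cyclicLT i a b) :=
  inferInstanceAs (Decidable ((a - i).val < (b - i).val))

/-- The Gale order `≤ᵢ` : comparing the sorted lists elementwise w.r.t. `≤ᵢ`. -/
def FinsetLE {n : ℕ} (i : Fin n) (A B : Finset (Fin n)) : Prop :=
  List.Forall₂ (· ≤ ·) (Finset.sort (A.image fun x => x - i) (· ≤ ·))
    (Finset.sort (B.image fun x => x - i) (· ≤ ·))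

/-- The positroid associated to a Grassmann necklace. -/
def positroid {n : ℕ} (N : Fin n → Finset (Fin n)) : Set (Finset (Fin n)) :=
  {J | (∀ i, J.card = (N i).card) ∧ ∀ i, FinsetLE i (N i) J}

/-- A weakly separated collection. -/
def IsWSC {n : ℕ} (W : Finset (Finset (Fin n))) : Prop :=
  ∀ A ∈ W, ∀ B ∈ W, WeaklySeparated A B

/-- A weakly separated collection over a Grassmann necklace. -/
def IsWSCOver {n : ℕ} (N : Fin n → Finset (Fin n)) (W : Finset (Finset (Fin n))) : Prop :=
  IsWSC W ∧ ∀ A ∈ W, A ∈ positroid N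

/-- A maximal weakly separated collection over a Grassmann necklace. -/
def IsMaxWSCOver {n : ℕ} (N : Fin n → Finset (Fin n)) (W : Finset (Finset (Fin n))) : Prop :=
  IsWSCOver N W ∧ ∀ W', IsWSCOver N W' → W ⊆ W' → W' = W

/-- `V ∪ {a, b}`. -/
def pairAdd {n : ℕ} (V : Finset (Fin n)) (a b : Fin n) : Finset (Fin n) :=
  insert a (insert b V)

/-- `V₂` is obtained from `V₁` by a mutation. -/
def Mutation {n : ℕ} (V1 V2 : Finset (Finset (Fin n))) : Prop :=
  ∃ (V : Finset (Fin n)) (a b c d : Fin n),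
    CyclicallyOrdered [a, b, c, d] ∧ a ∉ V ∧ b ∉ V ∧ c ∉ V ∧ d ∉ V ∧
    pairAdd V a b ∈ V1 ∧ pairAdd V b c ∈ V1 ∧ pairAdd V c d ∈ V1 ∧
    pairAdd V d a ∈ V1 ∧ pairAdd V a c ∈ V1 ∧
    V2 = insert (pairAdd V b d) (V1.erase (pairAdd V a c))

/-- The type of maximal weakly separated collections over `N`. -/
abbrev MWSC {n : ℕ} (N : Fin n → Finset (Fin n)) : Type :=
  {W : Finset (Finset (Fin n)) // IsMaxWSCOver N W}

/-- The exchange graph of a Grassmann necklace. -/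
def exchangeGraph {n : ℕ} (N : Fin n → Finset (Fin n)) : SimpleGraph (MWSC N) :=
  SimpleGraph.fromRel fun V1 V2 => Mutation V1.1 V2.1

/-- The type of maximal weakly separated collections over `N` containing `C`. -/
abbrev CMWSC {n : ℕ} (N : Fin n → Finset (Fin n)) (C : Finset (Finset (Fin n))) : Type :=
  {W : Finset (Finset (Fin n)) // IsMaxWSCOver N W ∧ C ⊆ W}

/-- The `C`-constant graph `G^I(C)` : the induced subgraph of the exchange graph
on the maximal weakly separated collections containing `C`. -/
def constantGraph {n : ℕ} (N : Fin n → Finset (Fin n)) (C : Finset (Finset (Fin n))) :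
    SimpleGraph (CMWSC N C) :=
  SimpleGraph.fromRel fun V1 V2 => Mutation V1.1 V2.1

/-- The set of distinct subsets appearing in the necklace. -/
def necklaceSet {n : ℕ} (N : Fin n → Finset (Fin n)) : Finset (Finset (Fin n)) :=
  Finset.univ.image N

/-- The necklace `N` has interior size `c`. -/
def HasInteriorSize {n : ℕ} (N : Fin n → Finset (Fin n)) (c : ℕ) : Prop :=
  ∀ W, IsMaxWSCOver N W → W.card = (necklaceSet N).card + c

/-- The `C`-constant graph `G^I(C)` has co-dimension `c`. -/
def HasCodim {n : ℕ} (N : Fin n → Finset (Fin n)) (C : Finset (Finset (Fin n))) (c : ℕ) :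
    Prop :=
  ∀ W, IsMaxWSCOver N W → W.card = C.card + c

/-- Two `k`-element subsets are quasi-adjacent if their intersection has `k - 1` elements. -/
def QuasiAdjacent {n : ℕ} (A B : Finset (Fin n)) : Prop :=
  A.card = B.card ∧ (A ∩ B).card + 1 = A.card

/-- The `C`-constant graph `G^I(C)` is applicable. -/
def Applicable {n : ℕ} (N : Fin n → Finset (Fin n)) (C : Finset (Finset (Fin n))) : Prop :=
  ∀ V ∈ C, ∃ l : List (Finset (Fin n)),
    l.head? = some V ∧ (∀ W ∈ l, W ∈ C) ∧ List.Chain' QuasiAdjacent l ∧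
    ∃ W ∈ necklaceSet N, l.getLast? = some W

/-- The necklace `N` is mutation-friendly: the intersection of all maximal weakly separated
collections over `N` is exactly the necklace. -/
def MutationFriendly {n : ℕ} (N : Fin n → Finset (Fin n)) : Prop :=
  ∀ A : Finset (Fin n), (∀ W, IsMaxWSCOver N W → A ∈ W) ↔ A ∈ necklaceSet N

/-- The `C`-constant graph `G^I(C)` is mutation-friendly. -/
def CMutationFriendly {n : ℕ} (N : Fin n → Finset (Fin n)) (C : Finset (Finset (Fin n))) :
    Prop :=
  ∀ A : Finset (Fin n), (∀ W, IsMaxWSCOver N W → C ⊆ W → A ∈ W) ↔ A ∈ C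

/-- The necklace `N` is very-mutation-friendly. -/
def VeryMutationFriendly {n : ℕ} (N : Fin n → Finset (Fin n)) : Prop :=
  MutationFriendly N ∧
    ∀ i : ℕ, HasInteriorSize N i →
      ∃ W : ℕ → Finset (Finset (Fin n)),
        (∀ j, 1 ≤ j → j ≤ i - 1 →
            IsWSCOver N (W j) ∧ necklaceSet N ⊆ W j ∧
            (W j).card + j = i + (necklaceSet N).card ∧
            Applicable N (W j) ∧ CMutationFriendly N (W j)) ∧
        ∀ j, 1 ≤ j → j + 1 ≤ i - 1 → W (j + 1) ⊆ W j

/-- The circular interval `[i, j)` in `[n]`. -/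
def circInterval {n : ℕ} (i j : Fin n) : Finset (Fin n) :=
  Finset.univ.filter fun x => (x - i).val < (j - i).val

/-- A connected decorated permutation. -/
def IsConnectedPerm {n : ℕ} (π : Equiv.Perm (Fin n)) : Prop :=
  ¬ ∃ i j : Fin n, i ≠ j ∧
      (circInterval i j).image (fun x => π x) = circInterval i j ∧
      (circInterval j i).image (fun x => π x) = circInterval j i

/-- The Grassmann necklace associated to a decorated permutation:
`I_i = {j : j <ᵢ π⁻¹(j)}`. -/
def necklaceOfPerm {n : ℕ} (π : Equiv.Perm (Fin n)) : Fin n → Finset (Fin n) :=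
  fun i => Finset.univ.filter fun j => cyclicLT i j (π⁻¹ j)

/-- `π` is the decorated permutation associated to the necklace `N`:
`π(i) = j` whenever `I_{i+1} = (I_i ∖ {i}) ∪ {j}`. -/
def IsDecoratedPermOf {n : ℕ} (π : Equiv.Perm (Fin n)) (N : Fin n → Finset (Fin n)) : Prop :=
  ∀ i : Fin n, N (cnext i) = insert (π i) ((N i).erase i)

/-- The label-reflection operation `LR^{2i}[π](j) = 2i - π⁻¹(2i - j)`. -/
def LRop {n : ℕ} [NeZero n] (i : Fin n) (π : Equiv.Perm (Fin n)) : Equiv.Perm (Fin n) :=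
  ((Equiv.subLeft (i + i)).trans (π⁻¹ : Equiv.Perm (Fin n))).trans
    (Equiv.subLeft (i + i))

/-- The between-label-reflection operation `BLR^{2i-1}[π](j) = (2i-1) - π⁻¹((2i-1) - j)`. -/
def BLRop {n : ℕ} [NeZero n] (i : Fin n) (π : Equiv.Perm (Fin n)) : Equiv.Perm (Fin n) :=
  ((Equiv.subLeft (i + i - 1)).trans (π⁻¹ : Equiv.Perm (Fin n))).trans
    (Equiv.subLeft (i + i - 1))

/-- The rotation operation `R^i[π](j) = π(j - i) + i`. -/
def Rop {n : ℕ} [NeZero n] (i : Fin n) (π : Equiv.Perm (Fin n)) : Equiv.Perm (Fin n) :=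
  ((Equiv.subRight i).trans π).trans (Equiv.addRight i)

/-- One step in generating the equivalence class of decorated permutations. -/
def PermStep {n : ℕ} [NeZero n] (π σ : Equiv.Perm (Fin n)) : Prop :=
  σ = π⁻¹ ∨ (∃ i : Fin n, σ = LRop i π) ∨
    (Even n ∧ ∃ i : Fin n, σ = BLRop i π) ∨ ∃ i : Fin n, σ = Rop i π

/-- Two decorated permutations belong to the same equivalence class. -/
def PermEquiv {n : ℕ} [NeZero n] (π σ : Equiv.Perm (Fin n)) : Prop :=
  Relation.EqvGen PermStep π σ

/-- `σ` is the permutation `π₁ = 312` (on `[3]`, in `Fin 3` coordinates). -/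
def IsStandardPermOne (σ : Equiv.Perm (Fin 3)) : Prop :=
  σ 1 = 0 ∧ σ 2 = 1 ∧ σ 0 = 2

/-- `σ` is the permutation `π_c` on `[2c]` (for `c ≥ 2`), in `Fin (2c)` coordinates,
where the element `a ∈ [2c]` corresponds to `a % 2c : Fin (2c)`. -/
def IsStandardPerm (c : ℕ) (hc : 2 ≤ c) (σ : Equiv.Perm (Fin (2 * c))) : Prop :=
  ∀ a : ℕ, 1 ≤ a → a ≤ 2 * c →
    σ ⟨a % (2 * c), Nat.mod_lt _ (by omega)⟩ =
      ⟨(if a = 1 then 3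
        else if a ≤ c then 2 * c + 1 - a
        else if a = c + 1 then 1
        else if a = c + 2 then 2
        else 2 * c + 3 - a) % (2 * c), Nat.mod_lt _ (by omega)⟩

/-- The decorated permutation `π` (on `[n]`) belongs to the equivalence class `𝒞_c`
of the permutation `π_c`. -/
def InStandardClass (c : ℕ) {n : ℕ} (π : Equiv.Perm (Fin n)) : Prop :=
  (c = 1 ∧ ∃ h : n = 3, ∃ σ : Equiv.Perm (Fin 3),
      IsStandardPermOne σ ∧ PermEquiv ((finCongr h).permCongr π) σ) ∨
    ∃ hc : 2 ≤ c, ∃ h : n = 2 * c, ∃ σ : Equiv.Perm (Fin (2 * c)),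
      IsStandardPerm c hc σ ∧
      @PermEquiv (2 * c) ⟨by omega⟩ ((finCongr h).permCongr π) σ

/-- The embedding of the elements of `[n]` into `[n + m - 2]` used in gluing (the element
`n` of `[n]`, i.e. `0 : Fin n`, is sent to the element `n` of `[n + m - 2]`). -/
def glueEmbed {n m : ℕ} (hn : 3 ≤ n) (hm : 3 ≤ m) (v : Fin n) : Fin (n + m - 2) :=
  if h : v.val = 0 then ⟨n, by omega⟩ else ⟨v.val, by have := v.isLt; omega⟩

/-- The shifted embedding `b ↦ b + n - 2` of the elements of `[m]` into `[n + m - 2]`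
used in gluing (the element `m` of `[m]`, i.e. `0 : Fin m`, is sent to the element
`n + m - 2`, i.e. `0 : Fin (n + m - 2)`). -/
def glueShift {n m : ℕ} (hn : 3 ≤ n) (hm : 3 ≤ m) (v : Fin m) : Fin (n + m - 2) :=
  if h : v.val = 0 then ⟨0, by omega⟩ else ⟨v.val + n - 2, by have := v.isLt; omega⟩

/-- `π₃` is the decorated permutation of the glued Grassmann necklace `I □ J`, where
`π₁, π₂` are the decorated permutations of `I, J`. -/
def IsGluedPerm {n m : ℕ} (hn : 3 ≤ n) (hm : 3 ≤ m)
    (π1 : Equiv.Perm (Fin n)) (π2 : Equiv.Perm (Fin m))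
    (π3 : Equiv.Perm (Fin (n + m - 2))) : Prop :=
  (∀ a : Fin n, a.val ≠ 0 → (π1 a).val ≠ 0 →
      π3 (glueEmbed hn hm a) = glueEmbed hn hm (π1 a)) ∧
  (∀ a : Fin n, a.val ≠ 0 → (π1 a).val = 0 →
      π3 (glueEmbed hn hm a) = glueShift hn hm (π2 ⟨1, by omega⟩)) ∧
  (∀ a : Fin m, (a.val = 0 ∨ 3 ≤ a.val) → π2 a ≠ ⟨1, by omega⟩ →
      π3 (glueShift hn hm a) = glueShift hn hm (π2 a)) ∧
  (∀ a : Fin m, (a.val = 0 ∨ 3 ≤ a.val) → π2 a = ⟨1, by omega⟩ →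
      π3 (glueShift hn hm a) = glueEmbed hn hm (π1 ⟨0, by omega⟩))

/-- The box product of an arbitrary family of simple graphs. -/
def boxProdFamily {ι : Type*} {V : ι → Type*} (G : ∀ i, SimpleGraph (V i)) :
    SimpleGraph (∀ i, V i) where
  Adj v w := ∃ j, (G j).Adj (v j) (w j) ∧ ∀ l, l ≠ j → v l = w l
  symm := by
    refine ⟨?_⟩
    rintro v w ⟨j, h, hl⟩
    exact ⟨j, (G j).adj_symm h, fun l hlj => (hl l hlj).symm⟩
  loopless := by
    refine ⟨?_⟩
    rintro v ⟨j, h, -⟩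
    exact (G j).loopless.irrefl _ h

open Finset

theorem forall₂_le_iff_countP_le {α : Type*} [LinearOrder α] :
    ∀ {l₁ l₂ : List α}, l₁.Pairwise (· ≤ ·) → l₂.Pairwise (· ≤ ·) → l₁.length = l₂.length →
      (List.Forall₂ (· ≤ ·) l₁ l₂ ↔ ∀ t, l₂.countP (· ≤ t) ≤ l₁.countP (· ≤ t))
  | [], [], _, _, _ => by simp
  | a :: l₁, b :: l₂, h₁, h₂, hlen => by
    rw [List.pairwise_cons] at h₁ h₂
    have ih := forall₂_le_iff_countP_le h₁.2 h₂.2 (Nat.succ_injective hlen)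
    have countP_eq_zero {x : α} {l : List α} (hl : ∀ y ∈ l, x ≤ y) {t : α} (hxt : ¬ x ≤ t) :
        l.countP (· ≤ t) = 0 :=
      List.countP_eq_zero.mpr fun y hy hyt => hxt ((hl y hy).trans (by simpa using hyt))
    simp only [List.forall₂_cons, ih, List.countP_cons, decide_eq_true_eq]
    constructor
    · rintro ⟨hab, h⟩ t
      have := h t
      split_ifs <;> first | omega | exact absurd (hab.trans ‹b ≤ t›) ‹_›
    · intro h
      have hab : a ≤ b := by
        by_contra hba
        have := h b
        rw [countP_eq_zero h₁.1 hba, if_neg hba, if_pos le_rfl] at this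
        omega
      refine ⟨hab, fun t => ?_⟩
      by_cases hbt : b ≤ t
      · have := h t
        rw [if_pos hbt, if_pos (hab.trans hbt)] at this
        omega
      · rw [countP_eq_zero h₂.1 hbt]
        exact Nat.zero_le _

section PermCounting

variable {α : Type*} [Fintype α] [DecidableEq α]

theorem card_filter_mem_not_mem_comm (σ : Equiv.Perm α) (M : Finset α) :
    #(univ.filter fun y => y ∈ M ∧ σ y ∉ M) = #(univ.filter fun y => y ∉ M ∧ σ y ∈ M) := by
  convert card_sdiff_comm (s := M) (t := M.map σ.symm.toEmbedding) (card_map _).symm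
    using 2 <;> ext y <;> simp [and_comm]

theorem card_filter_eq_of_perm (σ : Equiv.Perm α) (M : Finset α) {P Q : α → Prop}
    [DecidablePred P] [DecidablePred Q]
    (hP : ∀ y ∈ M, σ y ∉ M → P y) (hQ : ∀ y ∉ M, σ y ∈ M → Q y)
    (hPQ : ∀ y ∈ M, σ y ∈ M → (P y ↔ Q y)) :
    #(univ.filter fun y => y ∈ M ∧ P y) = #(univ.filter fun y => σ y ∈ M ∧ Q y) := by
  have key : #(univ.filter fun y => y ∈ M ∧ P y) + #(univ.filter fun y => y ∉ M ∧ σ y ∈ M) =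
      #(univ.filter fun y => σ y ∈ M ∧ Q y) + #(univ.filter fun y => y ∈ M ∧ σ y ∉ M) := by
    simp only [card_filter, ← sum_add_distrib]
    refine sum_congr rfl fun y _ => ?_
    by_cases hy : y ∈ M <;> by_cases hσy : σ y ∈ M
    · simp [hy, hσy, hPQ y hy hσy]
    · simp [hy, hσy, hP y hy hσy]
    · simp [hy, hσy, hQ y hy hσy]
    · simp [hy, hσy]
  rw [card_filter_mem_not_mem_comm σ M] at key
  omega

end PermCounting

section

variable {n : ℕ}

theorem val_sub_eq_ite (a b : Fin n) :
    (b - a).val = if a.val ≤ b.val then b.val - a.val else n + b.val - a.val := by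
  split_ifs with h
  · exact Fin.coe_sub_iff_le.mpr h
  · exact Fin.coe_sub_iff_lt.mpr (not_le.mp h)

theorem cyclicallyOrdered_four_iff {a b c d : Fin n} :
    CyclicallyOrdered [a, b, c, d] ↔
      0 < (b - a).val ∧ (b - a).val < (c - a).val ∧ (c - a).val < (d - a).val := by
  have := a.isLt; have := b.isLt; have := c.isLt; have := d.isLt
  simp only [CyclicallyOrdered, val_sub_eq_ite]
  constructor
  · rintro ⟨k, hk⟩
    rw [← List.rotate_mod] at hk
    have hk4 : k % 4 < 4 := Nat.mod_lt _ (by norm_num)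
    interval_cases k % 4 <;>
      simp [List.rotate, List.pairwise_cons] at hk <;> split_ifs <;> omega
  · intro h
    have : (a.val < b.val ∧ b.val < c.val ∧ c.val < d.val) ∨
        (b.val < c.val ∧ c.val < d.val ∧ d.val < a.val) ∨
        (c.val < d.val ∧ d.val < a.val ∧ a.val < b.val) ∨
        (d.val < a.val ∧ a.val < b.val ∧ b.val < c.val) := by
      split_ifs at h <;> omega
    rcases this with h | h | h | h
    exacts [⟨0, by simp [List.pairwise_cons]; omega⟩,
      ⟨1, by simp [List.rotate, List.pairwise_cons]; omega⟩,
      ⟨2, by simp [List.rotate, List.pairwise_cons]; omega⟩,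
      ⟨3, by simp [List.rotate, List.pairwise_cons]; omega⟩]

theorem CyclicallyOrdered.reflect [NeZero n] (s : Fin n) {a b c d : Fin n}
    (h : CyclicallyOrdered [a, b, c, d]) : CyclicallyOrdered [s - c, s - b, s - a, s - d] := by
  rw [cyclicallyOrdered_four_iff] at h ⊢
  simp only [sub_sub_sub_cancel_left, val_sub_eq_ite] at h ⊢
  have := a.isLt; have := b.isLt; have := c.isLt; have := d.isLt
  split_ifs at h ⊢ <;> omega

theorem pairAdd_comm (V : Finset (Fin n)) (a b : Fin n) : pairAdd V a b = pairAdd V b a :=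
  insert_comm a b V

section Reflect

variable [NeZero n] (s : Fin n)

def reflection : Finset (Fin n) ≃ Finset (Fin n) :=
  (Equiv.subLeft s).finsetCongr

theorem reflection_apply (A : Finset (Fin n)) :
    reflection s A = A.map (Equiv.subLeft s).toEmbedding :=
  rfl

@[simp]
theorem mem_reflection {A : Finset (Fin n)} {x : Fin n} : x ∈ reflection s A ↔ s - x ∈ A := by
  rw [reflection_apply, mem_map_equiv, Equiv.subLeft_symm_apply, neg_add_eq_sub]

@[simp]
theorem reflection_reflection (A : Finset (Fin n)) : reflection s (reflection s A) = A := by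
  ext
  simp

@[simp]
theorem reflection_symm : (reflection s).symm = reflection s :=
  Equiv.ext fun A => (reflection s).symm_apply_eq.mpr (reflection_reflection s A).symm

@[simp]
theorem card_reflection (A : Finset (Fin n)) : #(reflection s A) = #A :=
  card_map _

theorem reflection_inter (A B : Finset (Fin n)) :
    reflection s (A ∩ B) = reflection s A ∩ reflection s B :=
  map_inter A B

theorem reflection_pairAdd (V : Finset (Fin n)) (a b : Fin n) :
    reflection s (pairAdd V a b) = pairAdd (reflection s V) (s - a) (s - b) := by
  simp only [reflection_apply, pairAdd, map_insert]
  rfl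

end Reflect

section CyclicInterval

/-- Closed, unlike `circInterval`, so that the reflections `x ↦ s - x` map these intervals to
intervals of the same kind. -/
def cyclicIcc (u v : Fin n) : Finset (Fin n) :=
  univ.filter fun x => (x - u).val ≤ (v - u).val

@[simp]
theorem mem_cyclicIcc {u v x : Fin n} : x ∈ cyclicIcc u v ↔ (x - u).val ≤ (v - u).val := by
  simp [cyclicIcc]

theorem mem_cyclicIcc' {u v x : Fin n} : x ∈ cyclicIcc u v ↔ (v - x).val ≤ (v - u).val := by
  have := u.isLt; have := v.isLt; have := x.isLt
  rw [mem_cyclicIcc, val_sub_eq_ite u x, val_sub_eq_ite u v, val_sub_eq_ite x v]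
  split_ifs <;> omega

variable [NeZero n]

theorem cyclicIcc_sub_one (u : Fin n) : cyclicIcc u (u - 1) = univ := by
  obtain ⟨m, rfl⟩ := Nat.exists_eq_succ_of_ne_zero (NeZero.ne n)
  ext x
  simpa [sub_sub_cancel_left, Fin.coe_neg_one] using Nat.lt_succ_iff.mp (x - u).isLt

theorem reflection_cyclicIcc (s u v : Fin n) :
    reflection s (cyclicIcc u v) = cyclicIcc (s - v) (s - u) := by
  ext x
  have : x - (s - v) = v - (s - x) := by abel
  rw [mem_reflection, mem_cyclicIcc', mem_cyclicIcc, sub_sub_sub_cancel_left, this]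

theorem countP_sort_image_sub_le (u t : Fin n) (A : Finset (Fin n)) :
    (sort (A.image fun x => x - u) (· ≤ ·)).countP (· ≤ t) = #(A ∩ cyclicIcc u (u + t)) := by
  have hsort : ∀ S : Finset (Fin n), (sort S (· ≤ ·)).countP (· ≤ t) = #(S.filter (· ≤ t)) :=
    fun S => by
      rw [← Multiset.coe_countP, sort_eq, Multiset.countP_eq_card_filter]
      rfl
  rw [hsort, filter_image, card_image_of_injective _ sub_left_injective]
  congr 1
  ext x
  simp only [mem_filter, mem_inter, mem_cyclicIcc, add_sub_cancel_left, Fin.le_def]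

theorem finsetLE_iff_card_inter_cyclicIcc {u : Fin n} {A B : Finset (Fin n)}
    (h : #A = #B) :
    FinsetLE u A B ↔ ∀ v, #(B ∩ cyclicIcc u v) ≤ #(A ∩ cyclicIcc u v) := by
  rw [FinsetLE, forall₂_le_iff_countP_le (pairwise_sort _ _) (pairwise_sort _ _)
    (by simp [card_image_of_injective _ sub_left_injective, h])]
  simp only [countP_sort_image_sub_le]
  exact ⟨fun h v => by simpa using h (v - u), fun h t => h _⟩

theorem mem_positroid_iff {N : Fin n → Finset (Fin n)} {J : Finset (Fin n)} :
    J ∈ positroid N ↔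
      (∀ u, #J = #(N u)) ∧ ∀ u v, #(J ∩ cyclicIcc u v) ≤ #(N u ∩ cyclicIcc u v) :=
  and_congr_right fun hcard =>
    forall_congr' fun u => finsetLE_iff_card_inter_cyclicIcc (hcard u).symm

end CyclicInterval

section Necklace

theorem mem_necklaceOfPerm {π : Equiv.Perm (Fin n)} {u x : Fin n} :
    x ∈ necklaceOfPerm π u ↔ (x - u).val < (π⁻¹ x - u).val := by
  simp [necklaceOfPerm, cyclicLT]

theorem card_necklaceOfPerm_inter_cyclicIcc (π : Equiv.Perm (Fin n)) (u v : Fin n) :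
    #(necklaceOfPerm π u ∩ cyclicIcc u v) =
      #(univ.filter fun y => y ∈ cyclicIcc u v ∧ (v - y).val < (v - π y).val) := by
  have hmap : necklaceOfPerm π u ∩ cyclicIcc u v =
      (univ.filter fun y => π y ∈ cyclicIcc u v ∧ (π y - u).val < (y - u).val).map
        π.toEmbedding := by
    ext x
    simp [mem_necklaceOfPerm, mem_map_equiv, and_comm]
  rw [hmap, card_map]
  symm
  apply card_filter_eq_of_perm π
  all_goals
    intro y
    have := y.isLt; have := (π y).isLt; have := u.isLt; have := v.isLt
    simp only [mem_cyclicIcc, val_sub_eq_ite]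
    split_ifs <;> omega

variable [NeZero n]

theorem LRop_inv_apply (i : Fin n) (π : Equiv.Perm (Fin n)) (x : Fin n) :
    (LRop i π)⁻¹ x = i + i - π (i + i - x) := by
  apply (LRop i π).injective
  simp [LRop]

theorem necklaceOfPerm_LRop (i : Fin n) (π : Equiv.Perm (Fin n)) (v : Fin n) :
    necklaceOfPerm (LRop i π) (i + i - v) =
      reflection (i + i) (univ.filter fun y => (v - y).val < (v - π y).val) := by
  ext x
  have h : x - (i + i - v) = v - (i + i - x) := by abel
  rw [mem_necklaceOfPerm, mem_reflection, LRop_inv_apply, h, sub_sub_sub_cancel_left]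
  simp

theorem card_necklaceOfPerm_LRop_inter_cyclicIcc (i : Fin n) (π : Equiv.Perm (Fin n))
    (u v : Fin n) :
    #(necklaceOfPerm (LRop i π) (i + i - v) ∩ cyclicIcc (i + i - v) (i + i - u)) =
      #(necklaceOfPerm π u ∩ cyclicIcc u v) := by
  rw [necklaceOfPerm_LRop, ← reflection_cyclicIcc, ← reflection_inter, card_reflection,
    card_necklaceOfPerm_inter_cyclicIcc]
  congr 1
  ext y
  simp [and_comm]

theorem card_necklaceOfPerm_LRop (i : Fin n) (π : Equiv.Perm (Fin n)) (j : Fin n) :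
    #(necklaceOfPerm (LRop i π) j) = #(necklaceOfPerm π (i + i - j + 1)) := by
  have h := card_necklaceOfPerm_LRop_inter_cyclicIcc i π (i + i - j + 1) (i + i - j + 1 - 1)
  rwa [show i + i - (i + i - j + 1 - 1) = j by abel, show i + i - (i + i - j + 1) = j - 1 by abel,
    cyclicIcc_sub_one, cyclicIcc_sub_one, inter_univ, inter_univ] at h

theorem reflection_mem_positroid_LRop_iff (i : Fin n) (π : Equiv.Perm (Fin n))
    (J : Finset (Fin n)) :
    reflection (i + i) J ∈ positroid (necklaceOfPerm (LRop i π)) ↔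
      J ∈ positroid (necklaceOfPerm π) := by
  have hsurj := (Equiv.subLeft (i + i)).surjective
  rw [mem_positroid_iff, mem_positroid_iff]
  refine and_congr ?_ ?_
  · simp only [card_reflection, card_necklaceOfPerm_LRop]
    exact ⟨fun h u => by simpa using h (i + i - (u - 1)), fun h j => h _⟩
  · rw [hsurj.forall, forall_comm, hsurj.forall]
    simp only [Equiv.subLeft_apply, card_necklaceOfPerm_LRop_inter_cyclicIcc]
    simp only [← reflection_cyclicIcc, ← reflection_inter, card_reflection]

end Necklace

section Collections

variable [NeZero n] (s : Fin n)

theorem WeaklySeparated.reflect {A B : Finset (Fin n)} (h : WeaklySeparated A B) :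
    WeaklySeparated (reflection s A) (reflection s B) := by
  rintro ⟨a, b, a', b', hco, ha, ha', hb, hb'⟩
  simp only [mem_sdiff, mem_reflection] at ha ha' hb hb'
  exact h ⟨s - a', s - b, s - a, s - b', hco.reflect s,
    mem_sdiff.2 ha', mem_sdiff.2 ha, mem_sdiff.2 hb, mem_sdiff.2 hb'⟩

@[simp]
theorem mem_finsetCongr_reflection {W : Finset (Finset (Fin n))} {A : Finset (Fin n)} :
    A ∈ (reflection s).finsetCongr W ↔ reflection s A ∈ W := by
  simp [Equiv.finsetCongr_apply, mem_map_equiv]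

theorem IsWSC.reflect {W : Finset (Finset (Fin n))} (h : IsWSC W) :
    IsWSC ((reflection s).finsetCongr W) := fun A hA B hB => by
  simpa using (h _ ((mem_finsetCongr_reflection s).mp hA) _
    ((mem_finsetCongr_reflection s).mp hB)).reflect s

theorem Mutation.reflect {V₁ V₂ : Finset (Finset (Fin n))} (h : Mutation V₁ V₂) :
    Mutation ((reflection s).finsetCongr V₁) ((reflection s).finsetCongr V₂) := by
  obtain ⟨V, a, b, c, d, hco, ha, hb, hc, hd, hab, hbc, hcd, hda, hac, rfl⟩ := h
  refine ⟨reflection s V, s - c, s - b, s - a, s - d, hco.reflect s, ?_, ?_, ?_, ?_, ?_, ?_, ?_, ?_,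
    ?_, ?_⟩
  · simpa using hc
  · simpa using hb
  · simpa using ha
  · simpa using hd
  · simpa [reflection_pairAdd, pairAdd_comm] using hbc
  · simpa [reflection_pairAdd, pairAdd_comm] using hab
  · simpa [reflection_pairAdd, pairAdd_comm] using hda
  · simpa [reflection_pairAdd, pairAdd_comm] using hcd
  · simpa [reflection_pairAdd, pairAdd_comm] using hac
  · simp [Equiv.finsetCongr_apply, map_insert, map_erase, reflection_pairAdd, pairAdd_comm]

@[simp]
theorem finsetCongr_reflection_finsetCongr_reflection (W : Finset (Finset (Fin n))) :
    (reflection s).finsetCongr ((reflection s).finsetCongr W) = W := by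
  ext
  simp

theorem mutation_reflection_iff {V₁ V₂ : Finset (Finset (Fin n))} :
    Mutation ((reflection s).finsetCongr V₁) ((reflection s).finsetCongr V₂) ↔ Mutation V₁ V₂ :=
  ⟨fun h => by simpa only [finsetCongr_reflection_finsetCongr_reflection] using h.reflect s,
    Mutation.reflect s⟩

end Collections

section LabelReflection

variable [NeZero n] (i : Fin n) (π : Equiv.Perm (Fin n))

theorem isWSCOver_reflection_iff (W : Finset (Finset (Fin n))) :
    IsWSCOver (necklaceOfPerm (LRop i π)) ((reflection (i + i)).finsetCongr W) ↔
      IsWSCOver (necklaceOfPerm π) W := by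
  refine and_congr ⟨fun h => ?_, IsWSC.reflect (i + i)⟩ ?_
  · simpa only [finsetCongr_reflection_finsetCongr_reflection] using h.reflect (i + i)
  · rw [(reflection (i + i)).surjective.forall]
    simp [reflection_mem_positroid_LRop_iff]

theorem isMaxWSCOver_reflection_iff (W : Finset (Finset (Fin n))) :
    IsMaxWSCOver (necklaceOfPerm (LRop i π)) ((reflection (i + i)).finsetCongr W) ↔
      IsMaxWSCOver (necklaceOfPerm π) W := by
  rw [IsMaxWSCOver, IsMaxWSCOver, isWSCOver_reflection_iff,
    ((reflection (i + i)).finsetCongr).surjective.forall]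
  simp only [isWSCOver_reflection_iff, EmbeddingLike.apply_eq_iff_eq]
  simp only [Equiv.finsetCongr_apply, map_subset_map]

def reflectionMWSC : MWSC (necklaceOfPerm π) ≃ MWSC (necklaceOfPerm (LRop i π)) :=
  (reflection (i + i)).finsetCongr.subtypeEquiv fun W => (isMaxWSCOver_reflection_iff i π W).symm

def exchangeGraphIsoLR :
    exchangeGraph (necklaceOfPerm π) ≃g exchangeGraph (necklaceOfPerm (LRop i π)) where
  toEquiv := reflectionMWSC i π
  map_rel_iff' {_ _} := by
    simp only [exchangeGraph, SimpleGraph.fromRel_adj, reflectionMWSC, Equiv.subtypeEquiv_apply,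
      ne_eq, Subtype.mk.injEq, EmbeddingLike.apply_eq_iff_eq, Subtype.coe_inj,
      mutation_reflection_iff]

end LabelReflection

end

theorem exchangeGraph_iso_of_LR_general (n : ℕ) [NeZero n] (i : Fin n)
    (π : Equiv.Perm (Fin n)) :
    Nonempty (exchangeGraph (necklaceOfPerm π) ≃g exchangeGraph (necklaceOfPerm (LRop i π))) :=
  ⟨exchangeGraphIsoLR i π⟩

theorem exchangeGraph_iso_of_LR (n : ℕ) [NeZero n] (hn : 3 ≤ n) (i : Fin n)
    (π : Equiv.Perm (Fin n)) (hπ : IsConnectedPerm π) (hπ' : IsConnectedPerm (LRop i π)) :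
    Nonempty (exchangeGraph (necklaceOfPerm π) ≃g exchangeGraph (necklaceOfPerm (LRop i π))) :=
  exchangeGraph_iso_of_LR_general n i π

end WS
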